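/- Assume parties p₁ and p₂, a discount function d : ℕ → ℝ, a well-typed total external environment ρ, a template environment δ, and a typing context Γ. For every contract c, every extended template expression t₀, and every t₀' ∈ ℕ: if Γ ⊢ c and compileContr(c,t₀) = il, then there exists a real number v such that ilSem(il)(ρ,δ,t₀',0,d,p₁,p₂) = v. -/

import Mathlib

open scoped Classical

/-! Basic types -/

abbrev Party := ℕ
abbrev Asset := ℕ
abbrev Label := ℕ
abbrev Var := ℕ

/-- External environments: observables valued in ℝ ⊕ Bool at each (label, time). -/
abbrev ExtEnv := Label × ℤ → ℝ ⊕ Bool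

/-- Template environments. -/
abbrev TEnv := Var → ℕ

/-! Template expressions of the contract language: numerals or template variables. -/

inductive TExpr where
  | num (n : ℕ)
  | var (v : Var)

def tSemT : TExpr → TEnv → ℕ
  | .num n, _ => n
  | .var v, δ => δ v

/-! The expression sublanguage of CL. -/

inductive Exp where
  | rlit (r : ℝ)
  | blit (b : Bool)
  | obs (l : Label) (i : ℤ)
  | add (e1 e2 : Exp)
  | sub (e1 e2 : Exp)
  | mul (e1 e2 : Exp)
  | lt (e1 e2 : Exp)
  | neg (e : Exp)
  | bnot (e : Exp)
  | cond (b e1 e2 : Exp)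

noncomputable def eSem : Exp → ExtEnv → Option (ℝ ⊕ Bool)
  | .rlit r, _ => some (.inl r)
  | .blit b, _ => some (.inr b)
  | .obs l i, ρ => some (ρ (l, i))
  | .add e1 e2, ρ =>
      match eSem e1 ρ, eSem e2 ρ with
      | some (.inl r1), some (.inl r2) => some (.inl (r1 + r2))
      | _, _ => none
  | .sub e1 e2, ρ =>
      match eSem e1 ρ, eSem e2 ρ with
      | some (.inl r1), some (.inl r2) => some (.inl (r1 - r2))
      | _, _ => none
  | .mul e1 e2, ρ =>
      match eSem e1 ρ, eSem e2 ρ with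
      | some (.inl r1), some (.inl r2) => some (.inl (r1 * r2))
      | _, _ => none
  | .lt e1 e2, ρ =>
      match eSem e1 ρ, eSem e2 ρ with
      | some (.inl r1), some (.inl r2) => some (.inr (decide (r1 < r2)))
      | _, _ => none
  | .neg e, ρ =>
      match eSem e ρ with
      | some (.inl r) => some (.inl (-r))
      | _ => none
  | .bnot e, ρ =>
      match eSem e ρ with
      | some (.inr b) => some (.inr (!b))
      | _ => none
  | .cond b e1 e2, ρ =>
      match eSem b ρ with
      | some (.inr true) => eSem e1 ρ
      | some (.inr false) => eSem e2 ρ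
      | _ => none

/-! Contracts. -/

inductive Contr where
  | zero
  | transfer (p1 p2 : Party) (a : Asset)
  | scale (e : Exp) (c : Contr)
  | translate (t : TExpr) (c : Contr)
  | both (c1 c2 : Contr)
  | ifWithin (e : Exp) (t : TExpr) (c1 c2 : Contr)

/-! Traces and transfers. -/

def Transf := Party → Party → Asset → ℝ

def Trace := ℕ → Transf

def emptyTransf : Transf := fun _ _ _ => 0

/-- A transfer of one unit of asset `a` from `p1` to `p2` (antisymmetric). -/
noncomputable def singleTransf (p1 p2 : Party) (a : Asset) : Transf :=
  if p1 = p2 then emptyTransf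
  else fun q1 q2 b =>
    if q1 = p1 ∧ q2 = p2 ∧ b = a then 1
    else if q1 = p2 ∧ q2 = p1 ∧ b = a then (-1 : ℝ) else 0

def addTransf (T1 T2 : Transf) : Transf := fun p q a => T1 p q a + T2 p q a

def scaleTransf (r : ℝ) (T : Transf) : Transf := fun p q a => r * T p q a

/-- Delay a trace by `n` time steps. -/
def delayTrace (n : ℕ) (tr : Trace) : Trace :=
  fun t => if t < n then emptyTransf else tr (t - n)

/-- Advance an external environment by `n` time steps: `ρ/n := λ(l,i). ρ(l, i+n)`. -/
def advExt (n : ℕ) (ρ : ExtEnv) : ExtEnv := fun li => ρ (li.1, li.2 + n)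

/-- The net transfer from `p1` to `p2` of a transfer: the sum over all assets. -/
noncomputable def net (T : Transf) (p1 p2 : Party) : ℝ := ∑' a : Asset, T p1 p2 a

/-- Auxiliary semantics of `ifWithin`: test `e` at times `0..n`; take `s1`
(correspondingly delayed) at the first time the test is true, else `s2` delayed by `n`. -/
noncomputable def within (e : Exp) (s1 s2 : ExtEnv → Option Trace) :
    ℕ → ExtEnv → Option Trace
  | 0, ρ =>
      match eSem e ρ with
      | some (.inr true) => s1 ρ
      | some (.inr false) => s2 ρ
      | _ => none
  | n + 1, ρ =>
      match eSem e ρ with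
      | some (.inr true) => s1 ρ
      | some (.inr false) => (within e s1 s2 n (advExt 1 ρ)).map (delayTrace 1)
      | _ => none

/-- Denotational semantics of contracts (partial). -/
noncomputable def cSem : Contr → ExtEnv → TEnv → Option Trace
  | .zero, _, _ => some (fun _ => emptyTransf)
  | .transfer p1 p2 a, _, _ =>
      some (fun t => if t = 0 then singleTransf p1 p2 a else emptyTransf)
  | .scale e c, ρ, δ =>
      match eSem e ρ, cSem c ρ δ with
      | some (.inl r), some tr => some (fun t => scaleTransf r (tr t))
      | _, _ => none
  | .translate te c, ρ, δ =>
      (cSem c (advExt (tSemT te δ) ρ) δ).map (delayTrace (tSemT te δ))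
  | .both c1 c2, ρ, δ =>
      match cSem c1 ρ δ, cSem c2 ρ δ with
      | some t1, some t2 => some (fun t => addTransf (t1 t) (t2 t))
      | _, _ => none
  | .ifWithin e te c1 c2, ρ, δ =>
      within e (fun ρ' => cSem c1 ρ' δ) (fun ρ' => cSem c2 ρ' δ) (tSemT te δ) ρ

/-! Instantiation and template-closedness. -/

/-- Instantiation: replace every template expression by its value (as a numeral). -/
def inst : Contr → TEnv → Contr
  | .zero, _ => .zero
  | .transfer p1 p2 a, _ => .transfer p1 p2 a
  | .scale e c, δ => .scale e (inst c δ)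
  | .translate t c, δ => .translate (.num (tSemT t δ)) (inst c δ)
  | .both c1 c2, δ => .both (inst c1 δ) (inst c2 δ)
  | .ifWithin e t c1 c2, δ => .ifWithin e (.num (tSemT t δ)) (inst c1 δ) (inst c2 δ)

/-- Template-closed contracts: every template expression is a numeral. -/
inductive TemplateClosed : Contr → Prop where
  | zero : TemplateClosed .zero
  | transfer {p1 p2 : Party} {a : Asset} : TemplateClosed (.transfer p1 p2 a)
  | scale {e : Exp} {c : Contr} : TemplateClosed c → TemplateClosed (.scale e c)
  | translate {n : ℕ} {c : Contr} :
      TemplateClosed c → TemplateClosed (.translate (.num n) c)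
  | both {c1 c2 : Contr} :
      TemplateClosed c1 → TemplateClosed c2 → TemplateClosed (.both c1 c2)
  | ifWithin {e : Exp} {n : ℕ} {c1 c2 : Contr} :
      TemplateClosed c1 → TemplateClosed c2 →
      TemplateClosed (.ifWithin e (.num n) c1 c2)

/-! Symbolic horizon of a contract. -/

def horizon : Contr → TEnv → ℕ
  | .zero, _ => 0
  | .transfer _ _ _, _ => 1
  | .scale _ c, δ => horizon c δ
  | .translate t c, δ => tSemT t δ + horizon c δ
  | .both c1 c2, δ => max (horizon c1 δ) (horizon c2 δ)
  | .ifWithin _ t c1 c2, δ => tSemT t δ + max (horizon c1 δ) (horizon c2 δ)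

/-! Extended template expressions of the payoff language. -/

inductive TExprZ where
  | num (n : ℕ)
  | int (i : ℤ)
  | var (v : Var)
  | tplus (t1 t2 : TExprZ)

def tSemZ : TExprZ → TEnv → ℤ
  | .num n, _ => (n : ℤ)
  | .int i, _ => i
  | .var v, δ => (δ v : ℤ)
  | .tplus t1 t2, δ => tSemZ t1 δ + tSemZ t2 δ

/-- Smart constructor for addition of extended template expressions. -/
def smartTplus : TExprZ → TExprZ → TExprZ
  | .num n1, .num n2 => .num (n1 + n2)
  | t1, t2 => .tplus t1 t2

/-- Embedding of contract-language template expressions. -/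
def TExpr.toZ : TExpr → TExprZ
  | .num n => .num n
  | .var v => .var v

/-! The payoff intermediate language. -/

inductive ILUnOp where
  | neg
  | not

inductive ILBinOp where
  | add
  | sub
  | mul
  | lt
  | and
  | or

inductive ILExpr where
  | rlit (r : ℝ)
  | blit (b : Bool)
  | nlit (n : ℕ)
  | texpr (t : TExprZ)
  | now
  | model (l : Label) (t : TExprZ)
  | unop (op : ILUnOp) (e : ILExpr)
  | binop (op : ILBinOp) (e1 e2 : ILExpr)
  | ifte (b e1 e2 : ILExpr)
  | loopif (b e1 e2 : ILExpr) (t : TExpr)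
  | payoff (t : TExprZ) (p1 p2 : Party)

inductive ILVal where
  | int (i : ℤ)
  | real (r : ℝ)
  | bool (b : Bool)

def valToIL : ℝ ⊕ Bool → ILVal
  | .inl r => .real r
  | .inr b => .bool b

noncomputable def unopSem : ILUnOp → ILVal → Option ILVal
  | .neg, .real r => some (.real (-r))
  | .not, .bool b => some (.bool (!b))
  | _, _ => none

noncomputable def binopSem : ILBinOp → ILVal → ILVal → Option ILVal
  | .add, .real r1, .real r2 => some (.real (r1 + r2))
  | .sub, .real r1, .real r2 => some (.real (r1 - r2))
  | .mul, .real r1, .real r2 => some (.real (r1 * r2))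
  | .lt, .real r1, .real r2 => some (.bool (decide (r1 < r2)))
  | .lt, .int i1, .int i2 => some (.bool (decide (i1 < i2)))
  | .and, .bool b1, .bool b2 => some (.bool (b1 && b2))
  | .or, .bool b1, .bool b2 => some (.bool (b1 || b2))
  | _, _, _ => none

/-- Iteration used in the semantics of `loopif`: run for `n` steps starting at shift
`t0`, taking the first branch at the first shift where the condition is true, and the
second branch after `n` unsuccessful tests. -/
noncomputable def loopIter (fb f1 f2 : ℕ → Option ILVal) : ℕ → ℕ → Option ILVal
  | 0, t0 =>
      match fb t0 with
      | some (.bool true) => f1 t0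
      | some (.bool false) => f2 t0
      | _ => none
  | n + 1, t0 =>
      match fb t0 with
      | some (.bool true) => f1 t0
      | some (.bool false) => loopIter fb f1 f2 n (t0 + 1)
      | _ => none

/-- Semantics of payoff expressions: `ilSem il ρ δ t0 t d p1 p2`, where `t0` is the
accumulated shift, `t` the current time, and `d` the discount function. -/
noncomputable def ilSem :
    ILExpr → ExtEnv → TEnv → ℕ → ℕ → (ℕ → ℝ) → Party → Party → Option ILVal
  | .rlit r, _, _, _, _, _, _, _ => some (.real r)
  | .blit b, _, _, _, _, _, _, _ => some (.bool b)
  | .nlit n, _, _, _, _, _, _, _ => some (.int (n : ℤ))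
  | .texpr te, _, δ, t0, _, _, _, _ => some (.int (tSemZ te δ + (t0 : ℤ)))
  | .now, _, _, _, t, _, _, _ => some (.int (t : ℤ))
  | .model l te, ρ, δ, t0, _, _, _, _ =>
      match ρ (l, tSemZ te δ + (t0 : ℤ)) with
      | .inl r => some (.real r)
      | .inr b => some (.bool b)
  | .unop op e, ρ, δ, t0, t, d, p1, p2 =>
      (ilSem e ρ δ t0 t d p1 p2).bind (unopSem op)
  | .binop op e1 e2, ρ, δ, t0, t, d, p1, p2 =>
      match ilSem e1 ρ δ t0 t d p1 p2, ilSem e2 ρ δ t0 t d p1 p2 with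
      | some v1, some v2 => binopSem op v1 v2
      | _, _ => none
  | .ifte b e1 e2, ρ, δ, t0, t, d, p1, p2 =>
      match ilSem b ρ δ t0 t d p1 p2 with
      | some (.bool true) => ilSem e1 ρ δ t0 t d p1 p2
      | some (.bool false) => ilSem e2 ρ δ t0 t d p1 p2
      | _ => none
  | .loopif b e1 e2 te, ρ, δ, t0, t, d, p1, p2 =>
      loopIter (fun t0' => ilSem b ρ δ t0' t d p1 p2)
               (fun t0' => ilSem e1 ρ δ t0' t d p1 p2)
               (fun t0' => ilSem e2 ρ δ t0' t d p1 p2)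
               (tSemT te δ) t0
  | .payoff te q1 q2, _, δ, t0, _, d, p1, p2 =>
      some (.real
        (if q1 = p1 ∧ q2 = p2 then d (tSemZ te δ + (t0 : ℤ)).toNat
         else if q1 = p2 ∧ q2 = p1 then -(d (tSemZ te δ + (t0 : ℤ)).toNat)
         else 0))

/-! Compilation from CL to the payoff language. -/

def compileExp : Exp → TExprZ → ILExpr
  | .rlit r, _ => .rlit r
  | .blit b, _ => .blit b
  | .obs l i, t0 => .model l (.tplus t0 (.int i))
  | .add e1 e2, t0 => .binop .add (compileExp e1 t0) (compileExp e2 t0)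
  | .sub e1 e2, t0 => .binop .sub (compileExp e1 t0) (compileExp e2 t0)
  | .mul e1 e2, t0 => .binop .mul (compileExp e1 t0) (compileExp e2 t0)
  | .lt e1 e2, t0 => .binop .lt (compileExp e1 t0) (compileExp e2 t0)
  | .neg e, t0 => .unop .neg (compileExp e t0)
  | .bnot e, t0 => .unop .not (compileExp e t0)
  | .cond b e1 e2, t0 => .ifte (compileExp b t0) (compileExp e1 t0) (compileExp e2 t0)

def compileContr : Contr → TExprZ → ILExpr
  | .zero, _ => .rlit 0
  | .transfer p1 p2 _, t0 => .payoff t0 p1 p2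
  | .scale e c, t0 => .binop .mul (compileExp e t0) (compileContr c t0)
  | .translate t c, t0 => compileContr c (smartTplus t0 t.toZ)
  | .both c1 c2, t0 => .binop .add (compileContr c1 t0) (compileContr c2 t0)
  | .ifWithin e t c1 c2, t0 =>
      .loopif (compileExp e t0) (compileContr c1 t0) (compileContr c2 t0) t

/-- `cutPayoff`: guard every payoff by a comparison with the current time. -/
def cutPayoff : ILExpr → ILExpr
  | .payoff te p1 p2 =>
      .ifte (.binop .lt (.texpr te) .now) (.rlit 0) (.payoff te p1 p2)
  | .unop op e => .unop op (cutPayoff e)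
  | .binop op e1 e2 => .binop op (cutPayoff e1) (cutPayoff e2)
  | .ifte b e1 e2 => .ifte (cutPayoff b) (cutPayoff e1) (cutPayoff e2)
  | .loopif b e1 e2 t => .loopif (cutPayoff b) (cutPayoff e1) (cutPayoff e2) t
  | e => e

/-! Typing. -/

inductive Ty where
  | real
  | bool

/-- Assignment of types to observable labels. -/
abbrev LabelTy := Label → Ty

inductive ExpTy (Θ : LabelTy) : Exp → Ty → Prop where
  | rlit {r : ℝ} : ExpTy Θ (.rlit r) .real
  | blit {b : Bool} : ExpTy Θ (.blit b) .bool
  | obs {l : Label} {i : ℤ} : ExpTy Θ (.obs l i) (Θ l)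
  | add {e1 e2 : Exp} :
      ExpTy Θ e1 .real → ExpTy Θ e2 .real → ExpTy Θ (.add e1 e2) .real
  | sub {e1 e2 : Exp} :
      ExpTy Θ e1 .real → ExpTy Θ e2 .real → ExpTy Θ (.sub e1 e2) .real
  | mul {e1 e2 : Exp} :
      ExpTy Θ e1 .real → ExpTy Θ e2 .real → ExpTy Θ (.mul e1 e2) .real
  | lt {e1 e2 : Exp} :
      ExpTy Θ e1 .real → ExpTy Θ e2 .real → ExpTy Θ (.lt e1 e2) .bool
  | neg {e : Exp} : ExpTy Θ e .real → ExpTy Θ (.neg e) .real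
  | bnot {e : Exp} : ExpTy Θ e .bool → ExpTy Θ (.bnot e) .bool
  | cond {b e1 e2 : Exp} {τ : Ty} :
      ExpTy Θ b .bool → ExpTy Θ e1 τ → ExpTy Θ e2 τ → ExpTy Θ (.cond b e1 e2) τ

inductive ContrTy (Θ : LabelTy) : Contr → Prop where
  | zero : ContrTy Θ .zero
  | transfer {p1 p2 : Party} {a : Asset} : ContrTy Θ (.transfer p1 p2 a)
  | scale {e : Exp} {c : Contr} :
      ExpTy Θ e .real → ContrTy Θ c → ContrTy Θ (.scale e c)
  | translate {t : TExpr} {c : Contr} : ContrTy Θ c → ContrTy Θ (.translate t c)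
  | both {c1 c2 : Contr} :
      ContrTy Θ c1 → ContrTy Θ c2 → ContrTy Θ (.both c1 c2)
  | ifWithin {e : Exp} {t : TExpr} {c1 c2 : Contr} :
      ExpTy Θ e .bool → ContrTy Θ c1 → ContrTy Θ c2 →
      ContrTy Θ (.ifWithin e t c1 c2)

/-- A (total) external environment is well-typed when every observable has the type
assigned to its label. -/
def envWT (Θ : LabelTy) (ρ : ExtEnv) : Prop :=
  ∀ l i,
    match Θ l, ρ (l, i) with
    | .real, .inl _ => True
    | .bool, .inr _ => True
    | _, _ => False

/-! Reduction. -/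

/-- One-step reduction `c ⇒_{ρ,T} c'`: `c` advances by one time step in environment
`ρ`, producing the transfer `T` occurring at time 0.  It is characterized by
`cSem c ρ δ (0) = T` and `cSem c ρ δ (i+1) = cSem c' (ρ/1) δ (i)` for all `i`. -/
def RedStep (ρ : ExtEnv) (T : Transf) (c c' : Contr) : Prop :=
  ∀ δ : TEnv, ∃ tr tr' : Trace,
    cSem c ρ δ = some tr ∧ cSem c' (advExt 1 ρ) δ = some tr' ∧
    tr 0 = T ∧ ∀ i, tr (i + 1) = tr' i

/-- `n`-step reduction: iterate the one-step relation, advancing the environment by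
one step at each reduction. -/
inductive RedN : ℕ → ExtEnv → Contr → Contr → Prop where
  | refl {ρ : ExtEnv} {c : Contr} : RedN 0 ρ c c
  | step {n : ℕ} {ρ : ExtEnv} {T : Transf} {c c' c'' : Contr} :
      RedStep ρ T c c' → RedN n (advExt 1 ρ) c' c'' → RedN (n + 1) ρ c c''

/-- Partial external environments. -/
abbrev PExtEnv := Label × ℤ → Option (ℝ ⊕ Bool)

/-- `ρ` (total) extends the partial environment `ρp`. -/
def Extends (ρ : ExtEnv) (ρp : PExtEnv) : Prop :=
  ∀ l i v, ρp (l, i) = some v → ρ (l, i) = v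

/-- One-step reduction under a partial environment: reduction holds under every
total extension. -/
def RedStepP (ρp : PExtEnv) (T : Transf) (c c' : Contr) : Prop :=
  ∀ ρ : ExtEnv, Extends ρ ρp → RedStep ρ T c c'

/-!
Compiled expressions evaluate to a value of their type, and compiled contracts to a real,
for every offset `t0` and every shift: `translate` changes the offset and `loopif` the
shift, so the induction over the typing derivation quantifies over both, and `loopif`
then only ever evaluates pieces that are total.
-/

inductive ILVal.HasTy : ILVal → Ty → Prop where
  | real (r : ℝ) : ILVal.HasTy (.real r) .real
  | bool (b : Bool) : ILVal.HasTy (.bool b) .bool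

theorem loopIter_induction (motive : Option ILVal → Prop) {fb f1 f2 : ℕ → Option ILVal}
    (hb : ∀ s, ∃ b : Bool, fb s = some (.bool b))
    (h1 : ∀ s, motive (f1 s)) (h2 : ∀ s, motive (f2 s)) (n s : ℕ) :
    motive (loopIter fb f1 f2 n s) := by
  induction n generalizing s with
  | zero =>
    obtain ⟨b, hbs⟩ := hb s
    cases b <;> simp only [loopIter, hbs, h1, h2]
  | succ n ih =>
    obtain ⟨b, hbs⟩ := hb s
    cases b <;> simp only [loopIter, hbs, h1, ih]

theorem envWT.ilSem_model_hasTy {Θ : LabelTy} {ρ : ExtEnv} (hρ : envWT Θ ρ)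
    (l : Label) (te : TExprZ) (δ : TEnv) (s t : ℕ) (d : ℕ → ℝ) (p1 p2 : Party) :
    ∃ v, ilSem (.model l te) ρ δ s t d p1 p2 = some v ∧ v.HasTy (Θ l) := by
  have hl := hρ l (tSemZ te δ + s)
  simp only [ilSem]
  split at hl <;> simp only [*] at hl ⊢
  exacts [⟨_, rfl, .real _⟩, ⟨_, rfl, .bool _⟩]

theorem ilSem_compileExp_hasTy {Θ : LabelTy} {ρ : ExtEnv} (hρ : envWT Θ ρ)
    {e : Exp} {τ : Ty} (he : ExpTy Θ e τ)
    (t0 : TExprZ) (δ : TEnv) (s t : ℕ) (d : ℕ → ℝ) (p1 p2 : Party) :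
    ∃ v, ilSem (compileExp e t0) ρ δ s t d p1 p2 = some v ∧ v.HasTy τ := by
  induction he with
  | rlit => exact ⟨_, rfl, .real _⟩
  | blit => exact ⟨_, rfl, .bool _⟩
  | obs => exact hρ.ilSem_model_hasTy _ _ δ s t d p1 p2
  | add _ _ ih1 ih2 =>
    obtain ⟨_, h1, r1 | _⟩ := ih1
    obtain ⟨_, h2, r2 | _⟩ := ih2
    exact ⟨_, by simp only [compileExp, ilSem, h1, h2, binopSem], .real (r1 + r2)⟩
  | sub _ _ ih1 ih2 =>
    obtain ⟨_, h1, r1 | _⟩ := ih1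
    obtain ⟨_, h2, r2 | _⟩ := ih2
    exact ⟨_, by simp only [compileExp, ilSem, h1, h2, binopSem], .real (r1 - r2)⟩
  | mul _ _ ih1 ih2 =>
    obtain ⟨_, h1, r1 | _⟩ := ih1
    obtain ⟨_, h2, r2 | _⟩ := ih2
    exact ⟨_, by simp only [compileExp, ilSem, h1, h2, binopSem], .real (r1 * r2)⟩
  | lt _ _ ih1 ih2 =>
    obtain ⟨_, h1, r1 | _⟩ := ih1
    obtain ⟨_, h2, r2 | _⟩ := ih2
    exact ⟨_, by simp only [compileExp, ilSem, h1, h2, binopSem], .bool (decide (r1 < r2))⟩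
  | neg _ ih =>
    obtain ⟨_, h, r | _⟩ := ih
    exact ⟨_, by simp only [compileExp, ilSem, h, Option.bind_some, unopSem], .real (-r)⟩
  | bnot _ ih =>
    obtain ⟨_, h, _ | b⟩ := ih
    exact ⟨_, by simp only [compileExp, ilSem, h, Option.bind_some, unopSem], .bool (!b)⟩
  | cond _ _ _ ihb ih1 ih2 =>
    obtain ⟨_, hb, _ | b⟩ := ihb
    cases b <;> simpa only [compileExp, ilSem, hb]

theorem ilSem_compileContr_real {Θ : LabelTy} {ρ : ExtEnv} (hρ : envWT Θ ρ)
    {c : Contr} (hc : ContrTy Θ c)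
    (t0 : TExprZ) (δ : TEnv) (s t : ℕ) (d : ℕ → ℝ) (p1 p2 : Party) :
    ∃ r : ℝ, ilSem (compileContr c t0) ρ δ s t d p1 p2 = some (.real r) := by
  induction hc generalizing t0 s with
  | zero => exact ⟨0, rfl⟩
  | transfer => exact ⟨_, rfl⟩
  | scale he _ ih =>
    obtain ⟨_, hev, re | _⟩ := ilSem_compileExp_hasTy hρ he t0 δ s t d p1 p2
    obtain ⟨r, hr⟩ := ih t0 s
    exact ⟨re * r, by simp only [compileContr, ilSem, hev, hr, binopSem]⟩
  | translate _ ih => exact ih _ s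
  | both _ _ ih1 ih2 =>
    obtain ⟨r1, h1⟩ := ih1 t0 s
    obtain ⟨r2, h2⟩ := ih2 t0 s
    exact ⟨r1 + r2, by simp only [compileContr, ilSem, h1, h2, binopSem]⟩
  | ifWithin he _ _ ih1 ih2 =>
    refine loopIter_induction (fun o => ∃ r : ℝ, o = some (.real r)) (fun s' => ?_)
      (ih1 t0) (ih2 t0) _ s
    obtain ⟨_, hb, _ | b⟩ := ilSem_compileExp_hasTy hρ he t0 δ s' t d p1 p2
    exact ⟨b, hb⟩

/-- Total semantics for compiled contracts: if `Γ ⊢ c` and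
`compileContr c t₀ = il`, then for any `t₀' ∈ ℕ` the compiled expression
evaluates to some real number. -/
theorem compileContr_total (p1 p2 : Party) (d : ℕ → ℝ) (Θ : LabelTy)
    (ρ : ExtEnv) (hρ : envWT Θ ρ) (δ : TEnv)
    (c : Contr) (t0 : TExprZ) (t0' : ℕ) (il : ILExpr)
    (hty : ContrTy Θ c) (hcomp : compileContr c t0 = il) :
    ∃ v : ℝ, ilSem il ρ δ t0' 0 d p1 p2 = some (.real v) := by
  subst hcomp
  exact ilSem_compileContr_real hρ hty t0 δ t0' 0 d p1 p2
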